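/- arXiv:2403.19431 — 4 statements merged into one kernel-verified Lean document; each statement's English description precedes it below -/
import Mathlib

section
/- If Γ is valid at a base ℬ given a set of S5-modal relations 𝔯_A (i.e., Γ ⊩_{ℬ,𝔯_A} φ) and ℬ ⊆ 𝒞, then Γ ⊩_{𝒞,𝔯_A} φ. In particular, validity of any formula is monotone under base extension. -/
/-- A base rule: a finite set of premiss atoms and a conclusion atom. -/
abbrev Rule := Finset ℕ × ℕ

/-- A base is a collection of base rules. -/
abbrev Base := Set Rule

/-- Derivability of an atom in a base: closure of ∅ under the rules. -/
inductive Deriv (B : Base) : ℕ → Prop where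
  | step (L : Finset ℕ) (p : ℕ) (mem : (L, p) ∈ B)
      (prem : ∀ q ∈ L, Deriv B q) : Deriv B p

/-- A base is inconsistent iff every atom is derivable in it. -/
def Inconsistent (B : Base) : Prop := ∀ p : ℕ, Deriv B p

/-- Formulae of the multi-agent modal language over agents `A`. -/
inductive Form (A : Type) where
  | atom : ℕ → Form A
  | bot  : Form A
  | imp  : Form A → Form A → Form A
  | K    : A → Form A → Form A

/-- Negation abbreviation ¬φ := φ → ⊥. -/
def Form.neg {A : Type} (φ : Form A) : Form A := Form.imp φ Form.bot

/-- Validity at a base given a family of relations on bases. -/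
def Valid {A : Type} (R : A → Base → Base → Prop) : Base → Form A → Prop
  | B, .atom p => Deriv B p
  | B, .bot => ∀ p : ℕ, Deriv B p
  | B, .imp φ ψ => ∀ C : Base, B ⊆ C → Valid R C φ → Valid R C ψ
  | B, .K a φ => ∀ C : Base, R a B C → Valid R C φ

/-- Validity of φ at ℬ from a (nonempty) set of assumptions Γ. -/
def GammaValid {A : Type} (R : A → Base → Base → Prop)
    (Γ : Set (Form A)) (B : Base) (φ : Form A) : Prop :=
  ∀ C : Base, B ⊆ C → (∀ ψ ∈ Γ, Valid R C ψ) → Valid R C φ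

def Euclidean {X : Sort*} (r : X → X → Prop) : Prop :=
  ∀ x y z, r x y → r x z → r y z

/-- S5-modal relations on bases. -/
structure S5Rel (r : Base → Base → Prop) : Prop where
  incon_succ : ∀ B, Inconsistent B →
    (∃ C, r B C ∧ Inconsistent C) ∧ ∀ D, r B D → Inconsistent D
  con_succ : ∀ B, ¬ Inconsistent B → ∀ C, r B C → ¬ Inconsistent C
  zig : ∀ B C, r B C → ∀ D, B ⊆ D → ¬ Inconsistent D → ∃ E, C ⊆ E ∧ r D E
  zag : ∀ B C, r B C → ¬ Inconsistent C → ∀ D, D ⊆ B → ∃ E, E ⊆ C ∧ r D E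
  refl : ∀ B, r B B
  trans : ∀ B C D, r B C → r C D → r B D
  eucl : ∀ B C D, r B C → r B D → r C D

/-- Maximally-consistent bases. -/
def MaxCon (B : Base) : Prop :=
  ¬ Inconsistent B ∧ ∀ δ : Rule, δ ∈ B ∨ Inconsistent (insert δ B)

/-- A formula is valid iff it is valid at every base for every family of S5-modal relations. -/
def ValidAll {A : Type} (φ : Form A) : Prop :=
  ∀ R : A → Base → Base → Prop, (∀ a, S5Rel (R a)) → ∀ B : Base, Valid R B φ


/-!
Monotonicity of `Valid R · φ` is proved by induction on `φ`. Atoms, `⊥` and implications are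
monotone because derivability is, and because an implication already quantifies over all
extensions. For `K a φ`, take an `R a`-successor `C'` of the larger base: if `C'` is inconsistent,
it validates everything (inconsistency propagates along extensions and along `R a`); otherwise the
zag condition gives a successor of the smaller base below `C'`, and the induction hypothesis lifts
`φ` from it to `C'`. Monotonicity of `Γ`-validity is immediate, as it also quantifies over all
extensions.
-/

theorem Deriv.mono {B C : Base} (h : B ⊆ C) {p : ℕ} (hd : Deriv B p) : Deriv C p := by
  induction hd with
  | step L p mem _ ih => exact Deriv.step L p (h mem) ih

theorem Inconsistent.mono {B C : Base} (h : B ⊆ C) (hB : Inconsistent B) : Inconsistent C :=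
  fun p => (hB p).mono h

theorem S5Rel.inconsistent_of_rel {r : Base → Base → Prop} (hr : S5Rel r) {B C : Base}
    (hBC : r B C) (hB : Inconsistent B) : Inconsistent C :=
  (hr.incon_succ B hB).2 C hBC

section

variable {A : Type} {R : A → Base → Base → Prop}

theorem Valid.of_inconsistent (hR : ∀ a B C, R a B C → Inconsistent B → Inconsistent C)
    (φ : Form A) {B : Base} (hB : Inconsistent B) : Valid R B φ := by
  induction φ generalizing B with
  | atom p => exact hB p
  | bot => exact hB
  | imp _ _ _ ihψ => exact fun C hBC _ => ihψ (hB.mono hBC)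
  | K a _ ih => exact fun C hBC => ih (hR a B C hBC hB)

theorem Valid.mono (hR : ∀ a B C, R a B C → Inconsistent B → Inconsistent C)
    (hzag : ∀ a B C, R a B C → ¬ Inconsistent C → ∀ D, D ⊆ B → ∃ E, E ⊆ C ∧ R a D E)
    {φ : Form A} {B C : Base} (hBC : B ⊆ C) (hB : Valid R B φ) : Valid R C φ := by
  induction φ generalizing B C with
  | atom p => exact Deriv.mono hBC hB
  | bot => exact Inconsistent.mono hBC hB
  | imp _ _ _ _ => exact fun D hCD => hB D (hBC.trans hCD)
  | K a φ ih =>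
    intro C' hCC'
    by_cases hC' : Inconsistent C'
    · exact Valid.of_inconsistent hR φ hC'
    · obtain ⟨E, hEC', hBE⟩ := hzag a C C' hCC' hC' B hBC
      exact ih hEC' (hB E hBE)

theorem GammaValid.mono {Γ : Set (Form A)} {φ : Form A} {B C : Base} (hBC : B ⊆ C)
    (hB : GammaValid R Γ B φ) : GammaValid R Γ C φ :=
  fun D hCD => hB D (hBC.trans hCD)

end

/-- Monotonicity of (Γ-)validity under base extension. -/
theorem stmt0 {A : Type} (R : A → Base → Base → Prop) (hR : ∀ a, S5Rel (R a))
    (B C : Base) (hBC : B ⊆ C) (φ : Form A) :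
    (∀ Γ : Set (Form A), GammaValid R Γ B φ → GammaValid R Γ C φ) ∧
    (Valid R B φ → Valid R C φ) :=
  ⟨fun _ => GammaValid.mono hBC,
    Valid.mono (fun a _ _ => (hR a).inconsistent_of_rel) (fun a => (hR a).zag) hBC⟩
end

section
/- For every formula φ, every maximally-consistent base ℬ, and every set of S5-modal relations 𝔯_A, either ⊩_{ℬ,𝔯_A} φ or ⊩_{ℬ,𝔯_A} φ→⊥ (law of excluded middle at maximally-consistent bases). -/
theorem MaxCon.eq_of_subset {B C : Base} (hB : MaxCon B) (h : B ⊆ C)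
    (hC : ¬ Inconsistent C) : C = B := by
  refine Set.Subset.antisymm (fun δ hδ => ?_) h
  exact (hB.2 δ).resolve_right fun hins => hC (hins.mono (Set.insert_subset hδ h))

theorem stmt2_general {A : Type} (φ : Form A) (B : Base) (hB : MaxCon B)
    (R : A → Base → Base → Prop) :
    Valid R B φ ∨ Valid R B (φ.imp .bot) := by
  refine or_iff_not_imp_left.2 fun hφB C hBC hφC => ?_
  by_contra hC
  rw [hB.eq_of_subset hBC hC] at hφC
  exact hφB hφC

/-- Law of excluded middle at maximally-consistent bases. -/
theorem stmt2 {A : Type} (φ : Form A) (B : Base) (hB : MaxCon B)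
    (R : A → Base → Base → Prop) (hR : ∀ a, S5Rel (R a)) :
    Valid R B φ ∨ Valid R B (φ.imp .bot) :=
  stmt2_general φ B hB R
end

section
/- Axiom (2) holds in base-extension semantics for S5: φ→(ψ→χ) ⊩ (φ→ψ)→(φ→χ), i.e., at every base and every set of S5-modal relations, if φ→(ψ→χ) is valid, then (φ→ψ)→(φ→χ) is valid. -/
theorem Valid.imp_imp_distrib {A : Type} {R : A → Base → Base → Prop} {B : Base}
    {φ ψ χ : Form A} (h : Valid R B (φ.imp (ψ.imp χ))) :
    Valid R B ((φ.imp ψ).imp (φ.imp χ)) :=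
  fun _ hBC hφψ D hCD hφ => h D (hBC.trans hCD) hφ D subset_rfl (hφψ D hCD hφ)

theorem stmt10_general {A : Type} (φ ψ χ : Form A) (R : A → Base → Base → Prop)
    (B : Base) :
    GammaValid R {φ.imp (ψ.imp χ)} B ((φ.imp ψ).imp (φ.imp χ)) :=
  fun _ _ hΓ => (hΓ _ rfl).imp_imp_distrib

/-- Axiom (2): φ→(ψ→χ) ⊩ (φ→ψ)→(φ→χ). -/
theorem stmt10 {A : Type} (φ ψ χ : Form A) (R : A → Base → Base → Prop)
    (hR : ∀ a, S5Rel (R a)) (B : Base) :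
    GammaValid R {φ.imp (ψ.imp χ)} B ((φ.imp ψ).imp (φ.imp χ)) :=
  stmt10_general φ ψ χ R B
end

section
/- The 5 axiom holds in base-extension semantics for S5: ¬K_aφ ⊩ K_a¬K_aφ (where ¬χ abbreviates χ→⊥), i.e., at every base ℬ and set of S5-modal relations 𝔯_A, if ¬K_aφ is valid at ℬ then K_a¬K_aφ is valid at ℬ. -/
/-!
Let ¬K_aφ hold at 𝒞, let 𝔯_a 𝒞 ℰ, and let K_aφ hold at a consistent 𝒟 ⊇ ℰ. By symmetry
𝔯_a ℰ 𝒞, so condition (c) gives 𝔯_a 𝒟 𝒢 for some 𝒢 ⊇ 𝒞. By transitivity K_aφ also holds at 𝒢,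
so ¬K_aφ at 𝒞 makes 𝒢 inconsistent, although it is an 𝔯_a-successor of the consistent base 𝒟.
-/

variable {A : Type} {R : A → Base → Base → Prop} {a : A} {φ : Form A}

theorem S5Rel.symm {r : Base → Base → Prop} (hr : S5Rel r) {B C : Base} (h : r B C) : r C B :=
  hr.eucl B C B h (hr.refl B)

theorem valid_neg_iff {B : Base} :
    Valid R B φ.neg ↔ ∀ C, B ⊆ C → Valid R C φ → Inconsistent C :=
  Iff.rfl

theorem Valid.K_of_rel (hr : S5Rel (R a)) {F G : Base} (hF : Valid R F (.K a φ)) (hFG : R a F G) :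
    Valid R G (.K a φ) :=
  fun H hGH => hF H (hr.trans F G H hFG hGH)

theorem not_valid_K_of_valid_neg_K (hr : S5Rel (R a)) {C E F : Base}
    (hC : Valid R C (Form.K a φ).neg) (hCE : R a C E) (hEF : E ⊆ F) (hF : ¬ Inconsistent F) :
    ¬ Valid R F (.K a φ) := by
  intro hKF
  obtain ⟨G, hCG, hFG⟩ := hr.zig E C (hr.symm hCE) F hEF hF
  have hG : Inconsistent G := valid_neg_iff.mp hC G hCG (hKF.K_of_rel hr hFG)
  exact hr.con_succ F hF G hFG hG

theorem valid_K_neg_K_of_valid_neg_K (hr : S5Rel (R a)) {C : Base}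
    (hC : Valid R C (Form.K a φ).neg) : Valid R C (.K a (Form.K a φ).neg) := by
  intro E hCE F hEF hKF
  by_contra hF
  exact not_valid_K_of_valid_neg_K hr hC hCE hEF hF hKF

/-- Axiom 5: ¬K_aφ ⊩ K_a¬K_aφ. -/
theorem stmt15 {A : Type} (a : A) (φ : Form A) (R : A → Base → Base → Prop)
    (hR : ∀ a, S5Rel (R a)) (B : Base) :
    GammaValid R {(Form.K a φ).neg} B (Form.K a (Form.K a φ).neg) :=
  fun _ _ hΓ => valid_K_neg_K_of_valid_neg_K (hR a) (hΓ _ rfl)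
end
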